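/- Let Σ be the n×n Toeplitz matrix with entries ρ^{|i-j|}, ρ ∈ [0,1), let r > 1 and σ² > 0. If σ² > ((r-1)/r)·(1+ρ)/(1-ρ), then the matrix Iₙ + r σ² (Σ^{-1} − σ^{-2} Iₙ) = (1-r) Iₙ + r σ² Σ^{-1} is positive definite, and hence the r-th moment E_Q[L^r] of the likelihood ratio between N(0,Σ) and N(0, σ² Iₙ) is finite. -/

import Mathlib

open MeasureTheory Real Matrix

/-- Density of the centered `n`-dimensional Gaussian `N(0, S)` at `x`. -/
noncomputable def mvGaussPdf {n : ℕ} (S : Matrix (Fin n) (Fin n) ℝ)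
    (x : Fin n → ℝ) : ℝ :=
  ((2 * Real.pi) ^ (n : ℝ) * S.det) ^ (-(1 : ℝ) / 2) *
    Real.exp (-(x ⬝ᵥ S⁻¹.mulVec x) / 2)

/-!
`Σ` is the Kac–Murdock–Szegő matrix, whose inverse is tridiagonal:
`(1 - ρ²) Σ⁻¹ = (1 - ρ)² I + ρ L + ρ (1 - ρ) (e₁e₁ᵀ + eₙeₙᵀ)`, with `L` the Laplacian of the path
graph. The last two terms are positive semidefinite, so `Σ⁻¹ ≥ (1 - ρ)/(1 + ρ) I`, and
`(1 - r) I + r σ² Σ⁻¹ ≥ μ I` with `μ = 1 - r + r σ² (1 - ρ)/(1 + ρ)`, which is positive exactly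
under the hypothesis on `σ²`. The `r`-th moment integrand is a constant times
`exp (-xᵀ (r Σ⁻¹ + (1 - r) σ⁻² I) x / 2)`, whose matrix is `σ⁻²` times the previous one, so it is
dominated by a product of one-dimensional Gaussians.
-/

open Finset SimpleGraph
open scoped MatrixOrder

section LoewnerOrder

variable {ι : Type*} [DecidableEq ι]

lemma Matrix.posDef_of_smul_one_le {A : Matrix ι ι ℝ} {μ : ℝ} (hμ : 0 < μ) (h : μ • 1 ≤ A) :
    A.PosDef := by
  simpa using (PosDef.one.smul hμ).add_posSemidef (le_iff.mp h)

variable [Fintype ι]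

lemma Matrix.smul_dotProduct_self_le {A : Matrix ι ι ℝ} {μ : ℝ} (h : μ • 1 ≤ A) (x : ι → ℝ) :
    μ * (x ⬝ᵥ x) ≤ x ⬝ᵥ A *ᵥ x := by
  have := (le_iff.mp h).dotProduct_mulVec_nonneg x
  rw [star_trivial, sub_mulVec, dotProduct_sub, smul_mulVec, one_mulVec, dotProduct_smul,
    smul_eq_mul] at this
  linarith

lemma Matrix.smul_one_le_add_smul {P : Matrix ι ι ℝ} {c : ℝ} (h : c • 1 ≤ P) {a : ℝ} (ha : 0 ≤ a)
    (b : ℝ) : (b + a * c) • 1 ≤ b • 1 + a • P := by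
  rw [add_smul, mul_smul]
  exact add_le_add_right (smul_le_smul_of_nonneg_left h ha) _

lemma integrable_exp_neg_dotProduct_mulVec {A : Matrix ι ι ℝ} {μ : ℝ} (hμ : 0 < μ)
    (h : μ • 1 ≤ A) : Integrable fun x : ι → ℝ => exp (-(x ⬝ᵥ A *ᵥ x) / 2) := by
  have hprod : Integrable fun x : ι → ℝ => ∏ i, exp (-(μ / 2) * x i ^ 2) :=
    Integrable.fintype_prod fun _ => integrable_exp_neg_mul_sq (half_pos hμ)
  refine hprod.mono' (by fun_prop) (ae_of_all _ fun x => ?_)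
  rw [norm_of_nonneg (exp_nonneg _), ← exp_sum, exp_le_exp]
  have hx : x ⬝ᵥ x = ∑ i, x i ^ 2 := by simp only [dotProduct, sq]
  have := smul_dotProduct_self_le h x
  rw [← Finset.mul_sum, ← hx]
  linarith

end LoewnerOrder

section PathGraph

variable {M : Type*} [AddCommMonoid M]

lemma Fin.sum_ite_intCast_eq {n : ℕ} (f : ℤ → M) (m : ℤ) :
    ∑ k : Fin n, (if (k : ℤ) = m then f k else 0) = if 0 ≤ m ∧ m < n then f m else 0 := by
  split_ifs with h
  · lift m to ℕ using h.1
    rw [Finset.sum_eq_single ⟨m, by omega⟩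
      (fun k _ hk => if_neg fun h' => hk (Fin.ext (Nat.cast_inj.mp h'))) (by simp)]
    simp
  · exact Finset.sum_eq_zero fun k _ => if_neg (by omega)

instance (n : ℕ) : DecidableRel (pathGraph n).Adj :=
  fun _ _ => decidable_of_iff _ pathGraph_adj.symm

lemma sum_pathGraph_adj {n : ℕ} (i : Fin n) (f : ℤ → M) :
    ∑ k, (if (pathGraph n).Adj i k then f k else 0) =
      (if (i : ℤ) + 1 < n then f (i + 1) else 0) + (if 0 < (i : ℤ) then f (i - 1) else 0) := by
  calc ∑ k, (if (pathGraph n).Adj i k then f k else 0)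
      = ∑ k : Fin n, ((if (k : ℤ) = i + 1 then f k else 0) +
          (if (k : ℤ) = i - 1 then f k else 0)) := by
        refine Finset.sum_congr rfl fun k _ => ?_
        simp only [pathGraph_adj]
        split_ifs <;> first | omega | simp
    _ = _ := by
        rw [Finset.sum_add_distrib, Fin.sum_ite_intCast_eq, Fin.sum_ite_intCast_eq]
        congr 1 <;> exact if_congr (by omega) rfl rfl

lemma degree_pathGraph {R : Type*} [AddCommMonoidWithOne R] {n : ℕ} (i : Fin n) :
    ((pathGraph n).degree i : R) =
      (if (i : ℤ) + 1 < n then 1 else 0) + (if 0 < (i : ℤ) then 1 else 0) := by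
  rw [degree_eq_sum_if_adj]
  exact sum_pathGraph_adj i 1

end PathGraph

section KacMurdockSzego

variable (n : ℕ) (ρ : ℝ)

lemma pow_natAbs_sub_one_of_le {i j : ℤ} (h : i ≤ j) :
    ρ ^ (i - 1 - j).natAbs = ρ * ρ ^ (i - j).natAbs := by
  rw [show (i - 1 - j).natAbs = (i - j).natAbs + 1 by omega, pow_succ']

lemma pow_natAbs_add_one_of_le {i j : ℤ} (h : j ≤ i) :
    ρ ^ (i + 1 - j).natAbs = ρ * ρ ^ (i - j).natAbs := by
  rw [show (i + 1 - j).natAbs = (i - j).natAbs + 1 by omega, pow_succ']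

lemma pow_natAbs_three_term (i j : ℤ) :
    (1 + ρ ^ 2) * ρ ^ (i - j).natAbs - ρ * ρ ^ (i + 1 - j).natAbs - ρ * ρ ^ (i - 1 - j).natAbs =
      if i = j then 1 - ρ ^ 2 else 0 := by
  rcases lt_trichotomy i j with h | rfl | h
  · rw [if_neg h.ne, show (i - j).natAbs = (i + 1 - j).natAbs + 1 by omega,
      show (i - 1 - j).natAbs = (i + 1 - j).natAbs + 2 by omega]
    ring
  · rw [if_pos rfl, sub_self, show (i + 1 - i).natAbs = 1 by omega,
      show (i - 1 - i).natAbs = 1 by omega]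
    ring
  · rw [if_neg h.ne', show (i - j).natAbs = (i - 1 - j).natAbs + 1 by omega,
      show (i + 1 - j).natAbs = (i - 1 - j).natAbs + 2 by omega]
    ring

def kmsMatrix : Matrix (Fin n) (Fin n) ℝ :=
  fun i j => ρ ^ ((i : ℤ) - (j : ℤ)).natAbs

def pathEndpoints : Matrix (Fin n) (Fin n) ℝ :=
  diagonal fun i => (if (i : ℕ) = 0 then 1 else 0) + (if (i : ℕ) + 1 = n then 1 else 0)

/-- `(1 - ρ²)` times the inverse of `kmsMatrix n ρ`. -/
def kmsTridiag : Matrix (Fin n) (Fin n) ℝ :=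
  (1 - ρ) ^ 2 • 1 + ρ • (pathGraph n).lapMatrix ℝ + (ρ * (1 - ρ)) • pathEndpoints n

/-- In the interior this is `pow_natAbs_three_term`; at an endpoint the missing neighbour `k` of
`i` satisfies `ρ ^ |k - j| = ρ * ρ ^ |i - j|`, which the corner term `pathEndpoints` supplies. -/
lemma kmsTridiag_mul_kmsMatrix : kmsTridiag n ρ * kmsMatrix n ρ = (1 - ρ ^ 2) • 1 := by
  ext i j
  set s : ℤ → ℝ := fun k => ρ ^ (k - j).natAbs
  have hadj : ((pathGraph n).adjMatrix ℝ * kmsMatrix n ρ) i j =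
      ∑ k, if (pathGraph n).Adj i k then s k else 0 := by
    simp [mul_apply, adjMatrix_apply, kmsMatrix, s]
  simp only [kmsTridiag, lapMatrix, degMatrix, pathEndpoints, add_mul, smul_mul, sub_mul, one_mul,
    diagonal_mul, Matrix.add_apply, Matrix.smul_apply, Matrix.sub_apply, hadj, sum_pathGraph_adj,
    degree_pathGraph, smul_eq_mul]
  have h3 := pow_natAbs_three_term ρ i j
  have hlo : (if (i : ℕ) = 0 then 1 else 0) * (s (i - 1) - ρ * s i) = 0 := by
    split_ifs with h
    · rw [one_mul, sub_eq_zero]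
      exact pow_natAbs_sub_one_of_le ρ (by omega)
    · rw [zero_mul]
  have hhi : (if (i : ℕ) + 1 = n then 1 else 0) * (s (i + 1) - ρ * s i) = 0 := by
    split_ifs with h
    · rw [one_mul, sub_eq_zero]
      exact pow_natAbs_add_one_of_le ρ (by omega)
    · rw [zero_mul]
  change _ * s i + ρ * (_ * s i + _ * s i - _) + _ * (_ * s i + _ * s i) = _
  simp only [one_apply, Fin.ext_iff]
  split_ifs at h3 hlo hhi ⊢ <;> first | omega | linear_combination h3 + ρ * hlo + ρ * hhi

variable {ρ}

lemma inv_kmsMatrix (hρ : ρ ^ 2 ≠ 1) : (kmsMatrix n ρ)⁻¹ = (1 - ρ ^ 2)⁻¹ • kmsTridiag n ρ :=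
  inv_eq_left_inv <| by
    rw [smul_mul, kmsTridiag_mul_kmsMatrix, smul_smul, inv_mul_cancel₀ (sub_ne_zero.mpr hρ.symm),
      one_smul]

lemma smul_one_le_kmsTridiag (hρ : ρ ∈ Set.Icc (0 : ℝ) 1) : (1 - ρ) ^ 2 • 1 ≤ kmsTridiag n ρ := by
  have hends : (pathEndpoints n).PosSemidef :=
    posSemidef_diagonal_iff.mpr fun i => by positivity
  rw [le_iff, kmsTridiag, add_assoc, add_sub_cancel_left]
  exact ((posSemidef_lapMatrix ℝ _).smul hρ.1).add
    (hends.smul (mul_nonneg hρ.1 (sub_nonneg.mpr hρ.2)))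

lemma smul_one_le_inv_kmsMatrix (hρ : ρ ∈ Set.Ico (0 : ℝ) 1) :
    ((1 - ρ) / (1 + ρ)) • 1 ≤ (kmsMatrix n ρ)⁻¹ := by
  obtain ⟨hρ0, hρ1⟩ := hρ
  have h1ρ2 : 0 < 1 - ρ ^ 2 := by nlinarith
  rw [inv_kmsMatrix n (sub_pos.mp h1ρ2).ne,
    show (1 - ρ) / (1 + ρ) = (1 - ρ ^ 2)⁻¹ * (1 - ρ) ^ 2 by field_simp; ring, mul_smul]
  exact smul_le_smul_of_nonneg_left (smul_one_le_kmsTridiag n ⟨hρ0, hρ1.le⟩) (by positivity)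

lemma det_kmsMatrix_pos (hρ : ρ ∈ Set.Ico (0 : ℝ) 1) : 0 < (kmsMatrix n ρ).det := by
  have hpos := (posDef_of_smul_one_le (div_pos (by linarith [hρ.2]) (by linarith [hρ.1]))
    (smul_one_le_inv_kmsMatrix n hρ)).det_pos
  rwa [det_nonsing_inv, Ring.inverse_eq_inv, inv_pos] at hpos

end KacMurdockSzego

section GaussianLikelihoodRatio

variable {n : ℕ}

lemma mvGaussPdf_eq_mul_exp (S : Matrix (Fin n) (Fin n) ℝ) (x : Fin n → ℝ) :
    mvGaussPdf S x = mvGaussPdf S 0 * exp (-(x ⬝ᵥ S⁻¹ *ᵥ x) / 2) := by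
  simp [mvGaussPdf]

lemma mvGaussPdf_nonneg {S : Matrix (Fin n) (Fin n) ℝ} (hS : 0 ≤ S.det) (x : Fin n → ℝ) :
    0 ≤ mvGaussPdf S x :=
  mul_nonneg (rpow_nonneg (mul_nonneg (rpow_nonneg (by positivity) _) hS) _) (exp_nonneg _)

lemma mvGaussPdf_div_rpow_mul {S₁ S₂ : Matrix (Fin n) (Fin n) ℝ} (hS₁ : 0 ≤ S₁.det)
    (hS₂ : 0 ≤ S₂.det) (r : ℝ) (x : Fin n → ℝ) :
    (mvGaussPdf S₁ x / mvGaussPdf S₂ x) ^ r * mvGaussPdf S₂ x =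
      (mvGaussPdf S₁ 0 / mvGaussPdf S₂ 0) ^ r * mvGaussPdf S₂ 0 *
        exp (-(x ⬝ᵥ (r • S₁⁻¹ + (1 - r) • S₂⁻¹) *ᵥ x) / 2) := by
  rw [mvGaussPdf_eq_mul_exp S₁ x, mvGaussPdf_eq_mul_exp S₂ x, mul_div_mul_comm,
    mul_rpow (div_nonneg (mvGaussPdf_nonneg hS₁ 0) (mvGaussPdf_nonneg hS₂ 0))
      (div_nonneg (exp_nonneg _) (exp_nonneg _)),
    ← exp_sub, ← exp_mul, mul_mul_mul_comm, ← exp_add, add_mulVec, smul_mulVec, smul_mulVec,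
    dotProduct_add, dotProduct_smul, dotProduct_smul, smul_eq_mul, smul_eq_mul]
  ring_nf

end GaussianLikelihoodRatio

lemma feasibility_margin_pos {ρ r σ2 : ℝ} (hρ : ρ ∈ Set.Ico (0 : ℝ) 1) (hr : 1 < r)
    (hσ2 : (r - 1) / r * ((1 + ρ) / (1 - ρ)) < σ2) : 0 < 1 - r + r * σ2 * ((1 - ρ) / (1 + ρ)) := by
  have h1 : 0 < 1 - ρ := by linarith [hρ.2]
  have h2 : 0 < 1 + ρ := by linarith [hρ.1]
  have := mul_lt_mul_of_pos_right hσ2 (mul_pos (by linarith : 0 < r) (div_pos h1 h2))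
  field_simp at this ⊢
  linarith

theorem toeplitz_feasibility_and_finiteness_general (n : ℕ) (ρ : ℝ)
    (hρ : ρ ∈ Set.Ico (0 : ℝ) 1)
    (S : Matrix (Fin n) (Fin n) ℝ)
    (hS : ∀ i j : Fin n, S i j = ρ ^ ((i : ℤ) - (j : ℤ)).natAbs)
    (r σ2 : ℝ) (hr : 1 < r)
    (hσ2 : (r - 1) / r * ((1 + ρ) / (1 - ρ)) < σ2) :
    ((1 - r) • (1 : Matrix (Fin n) (Fin n) ℝ) + (r * σ2) • S⁻¹).PosDef ∧
      Integrable
        (fun x : Fin n → ℝ =>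
          (mvGaussPdf S x / mvGaussPdf (σ2 • (1 : Matrix (Fin n) (Fin n) ℝ)) x) ^ r *
            mvGaussPdf (σ2 • (1 : Matrix (Fin n) (Fin n) ℝ)) x)
        volume := by
  obtain rfl : S = kmsMatrix n ρ := Matrix.ext hS
  have hμ := feasibility_margin_pos hρ hr hσ2
  have hσ2pos : 0 < σ2 := by
    have hρc : 0 < (1 - ρ) / (1 + ρ) := div_pos (by linarith [hρ.2]) (by linarith [hρ.1])
    nlinarith [mul_pos (by linarith : (0 : ℝ) < r) hρc]
  have hA := smul_one_le_add_smul (smul_one_le_inv_kmsMatrix n hρ) (by positivity : 0 ≤ r * σ2)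
    (1 - r)
  refine ⟨posDef_of_smul_one_le hμ hA, ?_⟩
  have hinv : (σ2 • (1 : Matrix (Fin n) (Fin n) ℝ))⁻¹ = σ2⁻¹ • 1 :=
    inv_eq_left_inv (by rw [smul_mul_smul_comm, inv_mul_cancel₀ hσ2pos.ne', one_mul, one_smul])
  have hM : r • (kmsMatrix n ρ)⁻¹ + (1 - r) • (σ2 • (1 : Matrix (Fin n) (Fin n) ℝ))⁻¹ =
      σ2⁻¹ • ((1 - r) • 1 + (r * σ2) • (kmsMatrix n ρ)⁻¹) := by
    rw [hinv]
    match_scalars <;> field_simp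
  have hdet : 0 ≤ (σ2 • (1 : Matrix (Fin n) (Fin n) ℝ)).det := by
    rw [det_smul, det_one, mul_one]
    positivity
  have hB := smul_le_smul_of_nonneg_left hA (inv_nonneg.mpr hσ2pos.le)
  rw [← hM, smul_smul] at hB
  have hgauss := integrable_exp_neg_dotProduct_mulVec (mul_pos (inv_pos.mpr hσ2pos) hμ) hB
  exact (hgauss.const_mul _).congr
    (ae_of_all _ fun x => (mvGaussPdf_div_rpow_mul (det_kmsMatrix_pos n hρ).le hdet r x).symm)

/-- for the AR(1) Toeplitz matrix `S` with entries `ρ^{|i-j|}`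
(`ρ ∈ [0,1)`), `r > 1`, and `σ² > ((r-1)/r)·(1+ρ)/(1-ρ)`, the matrix
`(1-r)Iₙ + rσ² S⁻¹` is positive definite, and the `r`-th moment of the
likelihood ratio between `N(0,S)` and `N(0,σ²Iₙ)` is finite. -/
theorem toeplitz_feasibility_and_finiteness (n : ℕ) (hn : 1 ≤ n) (ρ : ℝ)
    (hρ : ρ ∈ Set.Ico (0 : ℝ) 1)
    (S : Matrix (Fin n) (Fin n) ℝ)
    (hS : ∀ i j : Fin n, S i j = ρ ^ ((i : ℤ) - (j : ℤ)).natAbs)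
    (r σ2 : ℝ) (hr : 1 < r)
    (hσ2 : (r - 1) / r * ((1 + ρ) / (1 - ρ)) < σ2) :
    ((1 - r) • (1 : Matrix (Fin n) (Fin n) ℝ) + (r * σ2) • S⁻¹).PosDef ∧
      Integrable
        (fun x : Fin n → ℝ =>
          (mvGaussPdf S x / mvGaussPdf (σ2 • (1 : Matrix (Fin n) (Fin n) ℝ)) x) ^ r *
            mvGaussPdf (σ2 • (1 : Matrix (Fin n) (Fin n) ℝ)) x)
        volume :=
  toeplitz_feasibility_and_finiteness_general n ρ hρ S hS r σ2 hr hσ2
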